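/- arXiv:1711.00374 — 2 statements merged into one kernel-verified Lean document; each statement's English description precedes it below -/
import Mathlib

section
/- For any graph G and any induced subgraph H of G, the i-th critical ideal of H is contained in the i-th critical ideal of G for all i ≤ |V(H)| (where the critical ideal of H is viewed inside the polynomial ring of G via the inclusion of variables). -/
open MvPolynomial Matrix

/-- The generalized Laplacian matrix of a graph, with variable `X u` on the
diagonal and `-1` at off-diagonal entries corresponding to edges. -/
noncomputable def genLap (R : Type*) [CommRing R] {V : Type*} [DecidableEq V]
    (G : SimpleGraph V) [DecidableRel G.Adj] :
    Matrix V V (MvPolynomial V R) :=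
  Matrix.of fun u v => if u = v then X u else if G.Adj u v then -1 else 0

/-- The `i`-th critical ideal of `G` over `R`: the ideal generated by all
`i × i` minors of the generalized Laplacian. -/
noncomputable def criticalIdeal (R : Type*) [CommRing R] {V : Type*} [DecidableEq V]
    (G : SimpleGraph V) [DecidableRel G.Adj] (i : ℕ) : Ideal (MvPolynomial V R) :=
  Ideal.span {p | ∃ f g : Fin i → V, Function.Injective f ∧ Function.Injective g ∧
    p = (((genLap R G).submatrix f g).det)}

/-- If `H` is an induced subgraph of `G` (via the embedding `f`), then for all
`i ≤ |V(H)|` the `i`-th critical ideal of `H`, pushed into the polynomial ring of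
`G` via renaming of variables along `f`, is contained in the `i`-th critical
ideal of `G`. -/
theorem criticalIdeal_mono_of_induced (R : Type*) [CommRing R]
    {V W : Type*} [DecidableEq V] [DecidableEq W] [Fintype W]
    (G : SimpleGraph V) [DecidableRel G.Adj]
    (H : SimpleGraph W) [DecidableRel H.Adj]
    (f : W ↪ V) (hf : ∀ a b : W, H.Adj a b ↔ G.Adj (f a) (f b))
    (i : ℕ) (hi : i ≤ Fintype.card W) :
    (criticalIdeal R H i).map (MvPolynomial.rename (f : W → V) : MvPolynomial W R →ₐ[R] MvPolynomial V R) ≤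
      criticalIdeal R G i := by

  rw [Ideal.map_le_iff_le_comap, criticalIdeal, Ideal.span_le]
  rintro p ⟨a, b, ha, hb, rfl⟩
  simp only [SetLike.mem_coe, Ideal.mem_comap]
  have key : (MvPolynomial.rename (f : W → V) : MvPolynomial W R →ₐ[R] MvPolynomial V R)
      ((genLap R H).submatrix a b).det
      = ((genLap R G).submatrix ((f : W → V) ∘ a) ((f : W → V) ∘ b)).det := by
    rw [AlgHom.map_det]
    congr 1
    ext j k
    simp only [Matrix.map_apply, Matrix.submatrix_apply, genLap, Matrix.of_apply,
      Function.comp_apply]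
    by_cases h1 : a j = b k
    · simp [h1, rename_X]
    · have h2 : (f : W → V) (a j) ≠ (f : W → V) (b k) := fun h => h1 (f.injective h)
      by_cases h3 : H.Adj (a j) (b k)
      · simp [h1, h2, h3, (hf _ _).mp h3]
      · have h4 : ¬ G.Adj (f (a j)) (f (b k)) := fun h => h3 ((hf _ _).mpr h)
        simp [h1, h2, h3, h4]
  rw [key]
  apply Ideal.subset_span
  exact ⟨(f : W → V) ∘ a, (f : W → V) ∘ b, f.injective.comp ha, f.injective.comp hb, rfl⟩
end

section
/- For any graph G, if H is an induced subgraph of G, then the algebraic co-rank of H is at most the algebraic co-rank of G, i.e., γ_R(H) ≤ γ_R(G). -/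
open MvPolynomial Matrix

/-- The algebraic co-rank: the largest `i` such that the `i`-th critical ideal
is the unit ideal. -/
noncomputable def algCoRank (R : Type*) [CommRing R] {V : Type*} [DecidableEq V]
    (G : SimpleGraph V) [DecidableRel G.Adj] : ℕ :=
  sSup {i | criticalIdeal R G i = ⊤}

/-- If `H` is an induced subgraph of `G`, then `γ_R(H) ≤ γ_R(G)`. -/
theorem algCoRank_le_of_induced (R : Type*) [CommRing R]
    {V W : Type*} [DecidableEq V] [DecidableEq W] [Fintype V] [Fintype W]
    (G : SimpleGraph V) [DecidableRel G.Adj]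
    (H : SimpleGraph W) [DecidableRel H.Adj]
    (f : W ↪ V) (hf : ∀ a b : W, H.Adj a b ↔ G.Adj (f a) (f b)) :
    algCoRank R H ≤ algCoRank R G := by
  have key : ∀ i, criticalIdeal R H i = ⊤ → criticalIdeal R G i = ⊤ := by
    intro i hi
    have hmap : Ideal.map (rename (R := R) f : MvPolynomial W R →ₐ[R] MvPolynomial V R)
        (criticalIdeal R H i) ≤ criticalIdeal R G i := by
      rw [criticalIdeal, Ideal.map_span]
      apply Ideal.span_le.2
      rintro p ⟨q, ⟨a, b, ha, hb, rfl⟩, rfl⟩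
      apply Ideal.subset_span
      refine ⟨f ∘ a, f ∘ b, f.injective.comp ha, f.injective.comp hb, ?_⟩
      show (rename (R := R) f).toRingHom _ = _
      rw [RingHom.map_det]
      congr 1
      ext k l
      simp only [Matrix.map_apply, Matrix.submatrix_apply, Function.comp,
        genLap, Matrix.of_apply, AlgHom.toRingHom_eq_coe, RingHom.coe_coe]
      by_cases h : a k = b l
      · simp [h]
      · have h' : f (a k) ≠ f (b l) := fun hc => h (f.injective hc)
        by_cases hadj : H.Adj (a k) (b l)
        · simp [h, h', hadj, (hf _ _).1 hadj]
        · have : ¬ G.Adj (f (a k)) (f (b l)) := fun hc => hadj ((hf _ _).2 hc)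
          simp [h, h', hadj, this]
    rw [Ideal.eq_top_iff_one] at hi ⊢
    have := Ideal.mem_map_of_mem
      (rename (R := R) f : MvPolynomial W R →ₐ[R] MvPolynomial V R) hi
    rw [_root_.map_one] at this
    exact hmap this
  have hsub : {i | criticalIdeal R H i = ⊤} ⊆ {i | criticalIdeal R G i = ⊤} :=
    fun i hi => key i hi
  -- 0 is always in the set for H
  have h0 : criticalIdeal R H 0 = ⊤ := by
    rw [Ideal.eq_top_iff_one]
    apply Ideal.subset_span
    refine ⟨Fin.elim0, Fin.elim0, fun x => x.elim0, fun x => x.elim0, ?_⟩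
    rw [Matrix.det_fin_zero]
  by_cases hbdd : BddAbove {i | criticalIdeal R G i = ⊤}
  · exact csSup_le_csSup hbdd ⟨0, h0⟩ hsub
  · -- unbounded case: the ring must be trivial
    obtain ⟨i, hi, hilt⟩ := (not_bddAbove_iff.1 hbdd) (Fintype.card V)
    have hempty : {p : MvPolynomial V R | ∃ a b : Fin i → V, Function.Injective a ∧
        Function.Injective b ∧ p = (((genLap R G).submatrix a b).det)} = ∅ := by
      ext p
      simp only [Set.mem_setOf_eq, Set.mem_empty_iff_false, iff_false]
      rintro ⟨a, b, ha, hb, rfl⟩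
      have := Fintype.card_le_of_injective a ha
      simp only [Fintype.card_fin] at this
      omega
    have hbot : criticalIdeal R G i = ⊥ := by
      rw [criticalIdeal, hempty, Ideal.span_empty]
    rw [hi] at hbot
    have h10 : (1 : MvPolynomial V R) = 0 := by
      have : (1 : MvPolynomial V R) ∈ (⊥ : Ideal (MvPolynomial V R)) := hbot ▸ trivial
      simpa using this
    have hR : (1 : R) = 0 := by
      have := congrArg (constantCoeff (R := R) (σ := V)) h10
      simpa using this
    have h10' : (1 : MvPolynomial W R) = 0 := by
      rw [← C_1, hR, C_0]
    have hHtop : ∀ j, criticalIdeal R H j = ⊤ := by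
      intro j
      rw [Ideal.eq_top_iff_one, h10']
      exact Ideal.zero_mem _
    have hHset : {j | criticalIdeal R H j = ⊤} = Set.univ := by
      ext j; simp [hHtop j]
    have hHubdd : ¬ BddAbove {j | criticalIdeal R H j = ⊤} := by
      rw [hHset]
      intro ⟨x, hx⟩
      exact absurd (hx (Set.mem_univ (x + 1))) (by omega)
    rw [algCoRank, algCoRank, csSup_of_not_bddAbove hbdd, csSup_of_not_bddAbove hHubdd]
end
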